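/- Let d ≥ 1 and let u ∈ ℓ²(ℤ^d) satisfy |Δ_d u_j| ≤ |V_j u_j| for all j ∈ ℤ^d, where V is a bounded potential (sup_{j∈ℤ^d} |V_j| < ∞). Then there exists η₀ > 0 depending only on the dimension d such that if Σ_{j∈ℤ^d} e^{2η₀ |j| log(|j|+1)} |u_j|² < +∞, then u ≡ 0. -/
import Mathlib

/-- Euclidean norm of a lattice point of `ℤ^d`. -/
noncomputable def latNorm {d : ℕ} (j : Fin d → ℤ) : ℝ :=
  Real.sqrt (∑ k, ((j k : ℝ)) ^ 2)

/-- Discrete Laplacian on `ℤ^d`: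
`Δ_d f j = Σ_{k=1}^d (f (j+e_k) + f (j-e_k) - 2 f j)`. -/
noncomputable def discreteLap {d : ℕ} (f : (Fin d → ℤ) → ℂ) (j : Fin d → ℤ) : ℂ :=
  ∑ k, (f (j + Pi.single k 1) + f (j - Pi.single k 1) - 2 * f j)

/-- **Uniqueness for the stationary discrete problem.**
If `u ∈ ℓ²(ℤ^d)` satisfies `|Δ_d u_j| ≤ |V_j u_j|` with a bounded potential `V`, then
there exists `η₀ > 0` depending only on `d` such that if
`Σ_j e^{2η₀|j|log(|j|+1)} |u_j|² < ∞`, then `u ≡ 0`. -/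
theorem uniqueness_stationary (d : ℕ) (hd : 1 ≤ d) :
    ∃ η₀ : ℝ, 0 < η₀ ∧
      ∀ (u V : (Fin d → ℤ) → ℂ) (L : ℝ),
        Summable (fun j => ‖u j‖ ^ 2) →
        (∀ j, ‖discreteLap u j‖ ≤ ‖V j * u j‖) →
        (∀ j, ‖V j‖ ≤ L) →
        Summable (fun j : Fin d → ℤ =>
          Real.exp (2 * η₀ * latNorm j * Real.log (latNorm j + 1)) * ‖u j‖ ^ 2) →
        ∀ j, u j = 0 := by
  refine ⟨1, one_pos, ?_⟩
  intro u V L hsum heq hV hwsum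
  have i₀ : Fin d := ⟨0, hd⟩
  have hL0 : 0 ≤ L := le_trans (norm_nonneg _) (hV 0)
  set C : ℝ := ∑' j : Fin d → ℤ,
      Real.exp (2 * 1 * latNorm j * Real.log (latNorm j + 1)) * ‖u j‖ ^ 2 with hCdef
  have hC0 : 0 ≤ C := tsum_nonneg fun j => by positivity
  have hptC : ∀ j, Real.exp (2 * 1 * latNorm j * Real.log (latNorm j + 1)) * ‖u j‖ ^ 2 ≤ C :=
    fun j => Summable.le_tsum hwsum j fun i _ => by positivity
  set B : ℝ := Real.sqrt (∑' j : Fin d → ℤ, ‖u j‖ ^ 2) with hBdef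
  have hB : ∀ j, ‖u j‖ ≤ B := by
    intro j
    have h1 : ‖u j‖ ^ 2 ≤ ∑' j : Fin d → ℤ, ‖u j‖ ^ 2 :=
      Summable.le_tsum hsum j fun i _ => by positivity
    have := Real.sqrt_le_sqrt h1
    rwa [Real.sqrt_sq (norm_nonneg _)] at this
  have hlat0 : ∀ j : Fin d → ℤ, 0 ≤ latNorm j := fun j => Real.sqrt_nonneg _
  have hlat : ∀ j : Fin d → ℤ, |((j i₀ : ℤ) : ℝ)| ≤ latNorm j := by
    intro j
    have h1 : ((j i₀ : ℝ)) ^ 2 ≤ ∑ k, ((j k : ℝ)) ^ 2 :=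
      Finset.single_le_sum (f := fun k => ((j k : ℝ)) ^ 2)
        (fun i _ => by positivity) (Finset.mem_univ i₀)
    calc |((j i₀ : ℤ) : ℝ)| = Real.sqrt (((j i₀ : ℝ)) ^ 2) := (Real.sqrt_sq_eq_abs _).symm
      _ ≤ latNorm j := Real.sqrt_le_sqrt h1
  -- the half-space suprema
  set M : ℤ → ℝ := fun m => sSup ((fun j => ‖u j‖) '' {j | m ≤ j i₀}) with hMdef
  have hbdd : ∀ m : ℤ, BddAbove ((fun j => ‖u j‖) '' {j | m ≤ j i₀}) := by
    intro m
    exact ⟨B, by rintro x ⟨j, -, rfl⟩; exact hB j⟩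
  have hmem : ∀ (m : ℤ) (j : Fin d → ℤ), m ≤ j i₀ → ‖u j‖ ≤ M m := by
    intro m j hj
    exact le_csSup (hbdd m) ⟨j, hj, rfl⟩
  have hM0 : ∀ m : ℤ, 0 ≤ M m := by
    intro m
    exact le_trans (norm_nonneg _) (hmem m (fun _ => m) (le_refl _))
  -- decay of M coming from the weighted summability
  have hdecay : ∀ (r : ℝ), 0 ≤ r → ∀ m : ℤ, r ≤ (m : ℝ) →
      M m ≤ Real.sqrt C * Real.exp (-(r * Real.log (r + 1))) := by
    intro r hr m hrm
    apply Real.sSup_le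
    · rintro x ⟨j, hj, rfl⟩
      have hj' : r ≤ ((j i₀ : ℤ) : ℝ) := le_trans hrm (by exact_mod_cast hj)
      have ht : r ≤ latNorm j := le_trans (le_trans hj' (le_abs_self _)) (hlat j)
      have hmono : r * Real.log (r + 1) ≤ latNorm j * Real.log (latNorm j + 1) :=
        mul_le_mul ht (Real.log_le_log (by linarith) (by linarith))
          (Real.log_nonneg (by linarith)) (hlat0 j)
      set a := r * Real.log (r + 1) with hadef
      have hexp : Real.exp (2 * a) ≤ Real.exp (2 * 1 * latNorm j * Real.log (latNorm j + 1)) := by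
        apply Real.exp_le_exp.mpr
        nlinarith [hmono]
      have h1 : Real.exp (2 * a) * ‖u j‖ ^ 2 ≤ C :=
        le_trans (mul_le_mul_of_nonneg_right hexp (by positivity)) (hptC j)
      have h2 : ‖u j‖ ^ 2 ≤ C * (Real.exp (-a)) ^ 2 := by
        have he : (Real.exp (-a)) ^ 2 = (Real.exp (2 * a))⁻¹ := by
          rw [← Real.exp_nat_mul]
          · rw [← Real.exp_neg]; ring_nf
        rw [he, ← div_eq_mul_inv]
        exact (le_div_iff₀ (Real.exp_pos _)).mpr (by nlinarith [h1])
      have h3 : ‖u j‖ ≤ Real.sqrt (C * (Real.exp (-a)) ^ 2) := by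
        have := Real.sqrt_le_sqrt h2
        rwa [Real.sqrt_sq (norm_nonneg _)] at this
      rw [Real.sqrt_mul hC0, Real.sqrt_sq (le_of_lt (Real.exp_pos _))] at h3
      exact h3
    · positivity
  -- the one-step recursion for M
  set K : ℝ := L + 4 * d + 4 with hKdef
  have hK1 : 1 ≤ K := by
    have : (1 : ℝ) ≤ (d : ℝ) := by exact_mod_cast hd
    simp only [hKdef]; nlinarith
  have hrec : ∀ m : ℤ, M (m - 1) ≤ K * M m := by
    intro m
    conv_lhs => rw [hMdef]
    apply Real.sSup_le
    · rintro x ⟨j, hj, rfl⟩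
      simp only [Set.mem_setOf_eq] at hj
      rcases le_or_gt m (j i₀) with hcase | hcase
      · exact le_trans (hmem m j hcase) (le_mul_of_one_le_left (hM0 m) hK1)
      · have hjm : j i₀ = m - 1 := by omega
        set j' : Fin d → ℤ := j + Pi.single i₀ 1 with hj'def
        have hj'c : j' i₀ = m := by
          simp [hj'def, Pi.single_eq_same]; omega
        have hsub : j' - Pi.single i₀ 1 = j := by
          simp [hj'def]
        have hid : u j = discreteLap u j' -
            (∑ k ∈ Finset.univ.erase i₀,
              (u (j' + Pi.single k 1) + u (j' - Pi.single k 1) - 2 * u j'))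
            - u (j' + Pi.single i₀ 1) + 2 * u j' := by
          unfold discreteLap
          rw [← Finset.add_sum_erase _ _ (Finset.mem_univ i₀), hsub]
          ring
        have hb1 : ‖u j'‖ ≤ M m := hmem m j' (le_of_eq hj'c.symm)
        have hb2 : ‖u (j' + Pi.single i₀ 1)‖ ≤ M m := by
          apply hmem
          simp [Pi.single_eq_same, hj'c]
        have hbΔ : ‖discreteLap u j'‖ ≤ L * M m := by
          refine le_trans (heq j') ?_
          rw [norm_mul]
          exact mul_le_mul (hV j') hb1 (norm_nonneg _) hL0
        have hbS : ‖∑ k ∈ Finset.univ.erase i₀,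
            (u (j' + Pi.single k 1) + u (j' - Pi.single k 1) - 2 * u j')‖
            ≤ (d : ℝ) * (4 * M m) := by
          refine le_trans (norm_sum_le _ _) ?_
          have hterm : ∀ k ∈ Finset.univ.erase i₀,
              ‖u (j' + Pi.single k 1) + u (j' - Pi.single k 1) - 2 * u j'‖ ≤ 4 * M m := by
            intro k hk
            have hkne : k ≠ i₀ := (Finset.mem_erase.mp hk).1
            have hz : (Pi.single k (1 : ℤ) : Fin d → ℤ) i₀ = 0 :=
              Pi.single_eq_of_ne (Ne.symm hkne) 1
            have hp : ((j' + Pi.single k 1 : Fin d → ℤ)) i₀ = m := by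
              simp [Pi.add_apply, hz, hj'c]
            have hq : ((j' - Pi.single k 1 : Fin d → ℤ)) i₀ = m := by
              simp [Pi.sub_apply, hz, hj'c]
            have h1 : ‖u (j' + Pi.single k 1)‖ ≤ M m := hmem m _ (le_of_eq hp.symm)
            have h2 : ‖u (j' - Pi.single k 1)‖ ≤ M m := hmem m _ (le_of_eq hq.symm)
            have h3 : ‖(2 : ℂ) * u j'‖ ≤ 2 * M m := by
              rw [norm_mul]
              have : ‖(2 : ℂ)‖ = 2 := by norm_num
              rw [this]; linarith
            calc ‖u (j' + Pi.single k 1) + u (j' - Pi.single k 1) - 2 * u j'‖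
                ≤ ‖u (j' + Pi.single k 1) + u (j' - Pi.single k 1)‖ + ‖(2:ℂ) * u j'‖ :=
                  norm_sub_le _ _
              _ ≤ ‖u (j' + Pi.single k 1)‖ + ‖u (j' - Pi.single k 1)‖ + ‖(2:ℂ) * u j'‖ := by
                  linarith [norm_add_le (u (j' + Pi.single k 1)) (u (j' - Pi.single k 1))]
              _ ≤ 4 * M m := by linarith
          calc ∑ k ∈ Finset.univ.erase i₀,
                ‖u (j' + Pi.single k 1) + u (j' - Pi.single k 1) - 2 * u j'‖
              ≤ ∑ _k ∈ Finset.univ.erase i₀, (4 * M m) := Finset.sum_le_sum hterm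
            _ ≤ ∑ _k : Fin d, (4 * M m) := by
                apply Finset.sum_le_sum_of_subset_of_nonneg (Finset.erase_subset _ _)
                intro k _ _
                linarith [hM0 m]
            _ = (d : ℝ) * (4 * M m) := by
                rw [Finset.sum_const, Finset.card_univ, Fintype.card_fin, nsmul_eq_mul]
        have h3' : ‖(2 : ℂ) * u j'‖ ≤ 2 * M m := by
          rw [norm_mul]
          have : ‖(2 : ℂ)‖ = 2 := by norm_num
          rw [this]; linarith
        calc ‖u j‖ = ‖discreteLap u j' -
            (∑ k ∈ Finset.univ.erase i₀,
              (u (j' + Pi.single k 1) + u (j' - Pi.single k 1) - 2 * u j'))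
            - u (j' + Pi.single i₀ 1) + 2 * u j'‖ := by rw [← hid]
          _ ≤ ‖discreteLap u j' -
              (∑ k ∈ Finset.univ.erase i₀,
                (u (j' + Pi.single k 1) + u (j' - Pi.single k 1) - 2 * u j'))
              - u (j' + Pi.single i₀ 1)‖ + ‖(2:ℂ) * u j'‖ := norm_add_le _ _
          _ ≤ ‖discreteLap u j' -
              (∑ k ∈ Finset.univ.erase i₀,
                (u (j' + Pi.single k 1) + u (j' - Pi.single k 1) - 2 * u j'))‖
              + ‖u (j' + Pi.single i₀ 1)‖ + ‖(2:ℂ) * u j'‖ := by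
              linarith [norm_sub_le (discreteLap u j' -
                (∑ k ∈ Finset.univ.erase i₀,
                  (u (j' + Pi.single k 1) + u (j' - Pi.single k 1) - 2 * u j')))
                (u (j' + Pi.single i₀ 1))]
          _ ≤ ‖discreteLap u j'‖ + ‖∑ k ∈ Finset.univ.erase i₀,
                (u (j' + Pi.single k 1) + u (j' - Pi.single k 1) - 2 * u j')‖
              + ‖u (j' + Pi.single i₀ 1)‖ + ‖(2:ℂ) * u j'‖ := by
              linarith [norm_sub_le (discreteLap u j')
                (∑ k ∈ Finset.univ.erase i₀,
                  (u (j' + Pi.single k 1) + u (j' - Pi.single k 1) - 2 * u j'))]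
          _ ≤ L * M m + (d : ℝ) * (4 * M m) + M m + 2 * M m := by linarith
          _ ≤ K * M m := by simp only [hKdef]; nlinarith [hM0 m]
    · exact mul_nonneg (by linarith) (hM0 m)
  -- iterate the recursion and use the decay to conclude that M vanishes
  have hMzero : ∀ m₀ : ℤ, M m₀ ≤ 0 := by
    intro m₀
    have hK0 : (0 : ℝ) < K := lt_of_lt_of_le one_pos hK1
    have hiter : ∀ n : ℕ, M m₀ ≤ K ^ n * M (m₀ + n) := by
      intro n
      induction n with
      | zero => simp
      | succ n ih =>
        have h1 : M (m₀ + n) ≤ K * M (m₀ + n + 1) := by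
          have := hrec (m₀ + n + 1)
          simpa using this
        calc M m₀ ≤ K ^ n * M (m₀ + n) := ih
          _ ≤ K ^ n * (K * M (m₀ + n + 1)) :=
              mul_le_mul_of_nonneg_left h1 (by positivity)
          _ = K ^ (n + 1) * M (m₀ + (n + 1)) := by push_cast; ring_nf
    set e : ℕ → ℝ := fun n =>
        (n : ℝ) * Real.log K - ((m₀ : ℝ) + n) * Real.log ((m₀ : ℝ) + n + 1) with hedef
    set b : ℕ → ℝ := fun n => Real.sqrt C * Real.exp (e n) with hbdef
    have hKn : ∀ n : ℕ, K ^ n = Real.exp ((n : ℝ) * Real.log K) := by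
      intro n
      rw [Real.exp_nat_mul, Real.exp_log hK0]
    have hshift : Filter.Tendsto (fun n : ℕ => (m₀ : ℝ) + n) Filter.atTop Filter.atTop :=
      Filter.tendsto_atTop_add_const_left _ _ tendsto_natCast_atTop_atTop
    have hble : ∀ᶠ n : ℕ in Filter.atTop, M m₀ ≤ b n := by
      filter_upwards [hshift.eventually_ge_atTop 0] with n hn
      have hd1 : M (m₀ + n) ≤ Real.sqrt C *
          Real.exp (-(((m₀ : ℝ) + n) * Real.log (((m₀ : ℝ) + n) + 1))) := by
        apply hdecay _ hn
        push_cast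
        exact le_refl _
      calc M m₀ ≤ K ^ n * M (m₀ + n) := hiter n
        _ ≤ K ^ n * (Real.sqrt C *
            Real.exp (-(((m₀ : ℝ) + n) * Real.log (((m₀ : ℝ) + n) + 1)))) :=
            mul_le_mul_of_nonneg_left hd1 (by positivity)
        _ = b n := by
            rw [hKn n, hbdef, hedef]
            simp only []
            rw [mul_comm, mul_assoc, ← Real.exp_add]
            ring_nf
    have he : Filter.Tendsto e Filter.atTop Filter.atBot := by
      have hub : ∀ᶠ n : ℕ in Filter.atTop,
          e n ≤ (-(m₀ : ℝ) * Real.log K - m₀) - n := by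
        have hlog : Filter.Tendsto (fun n : ℕ => Real.log ((m₀ : ℝ) + n + 1))
            Filter.atTop Filter.atTop :=
          Real.tendsto_log_atTop.comp (Filter.tendsto_atTop_add_const_right _ _ hshift)
        filter_upwards [hshift.eventually_ge_atTop 0,
          hlog.eventually_ge_atTop (Real.log K + 1)] with n hn hln
        have h1 : ((m₀ : ℝ) + n) * (Real.log K + 1) ≤
            ((m₀ : ℝ) + n) * Real.log ((m₀ : ℝ) + n + 1) :=
          mul_le_mul_of_nonneg_left hln hn
        simp only [hedef]
        nlinarith
      have hg : Filter.Tendsto (fun n : ℕ => (-(m₀ : ℝ) * Real.log K - m₀) - n)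
          Filter.atTop Filter.atBot :=
        Filter.tendsto_atBot_add_const_left _ _
          (Filter.tendsto_neg_atBot_iff.mpr tendsto_natCast_atTop_atTop)
      exact Filter.tendsto_atBot_mono' Filter.atTop hub hg
    have hb0 : Filter.Tendsto b Filter.atTop (nhds 0) := by
      have := (Real.tendsto_exp_atBot.comp he).const_mul (Real.sqrt C)
      simpa using this
    exact ge_of_tendsto hb0 hble
  -- conclude
  intro j
  have h1 : ‖u j‖ ≤ M (j i₀) := hmem (j i₀) j (le_refl _)
  have h2 : ‖u j‖ ≤ 0 := le_trans h1 (hMzero (j i₀))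
  exact norm_le_zero_iff.mp h2
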